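/- arXiv:2602.09674 — 2 statements merged into one kernel-verified Lean document; each statement's English description precedes it below -/
import Mathlib

section
/- For any small category A, the full subcategory of abelian presheaves on A whose objects are finite direct sums of representable abelian presheaves (i.e. presheaves of the form a ↦ ⊕_{i∈I} ℤ^(Hom_A(a, a_i)) for a finite set I) is a dense subcategory of the category of abelian presheaves on A; that is, every abelian presheaf is the colimit of the canonical diagram of such objects mapping to it. -/
open CategoryTheory Limits Opposite

noncomputable section

/-- The abelianized Yoneda embedding, sending `a` to the representable abelian presheaf
`b ↦ ℤ^(Hom_A(b, a))`. -/
def abYoneda (A : Type) [SmallCategory A] : A ⥤ (Aᵒᵖ ⥤ AddCommGrpCat) :=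
  yoneda ⋙ (Functor.whiskeringRight _ _ _).obj AddCommGrpCat.free

/-- The property of being (isomorphic to) a finite direct sum of representable
abelian presheaves. -/
def IsFiniteSumOfRepresentables {A : Type} [SmallCategory A]
    (Z : Aᵒᵖ ⥤ AddCommGrpCat) : Prop :=
  ∃ (n : ℕ) (a : Fin n → A), Nonempty (Z ≅ ∐ fun i => (abYoneda A).obj (a i))

/-- The inclusion of the additive envelope `Add(A)` (finite direct sums of representable
abelian presheaves) into the category of abelian presheaves on `A`. -/
def addEnvelopeInclusion (A : Type) [SmallCategory A] :
    ObjectProperty.FullSubcategory (IsFiniteSumOfRepresentables (A := A)) ⥤ (Aᵒᵖ ⥤ AddCommGrpCat) :=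
  ObjectProperty.ι _

/-- The canonical cocone on the diagram `Add(A)/X → (Aᵒᵖ ⥤ Ab)` with apex `X`, whose legs
are the structure morphisms. -/
@[simps]
def canonicalCocone {A : Type} [SmallCategory A] (X : Aᵒᵖ ⥤ AddCommGrpCat) :
    Cocone (CostructuredArrow.proj (addEnvelopeInclusion A) X ⋙ addEnvelopeInclusion A) where
  pt := X
  ι :=
    { app := fun f => f.hom
      naturality := fun f g φ => (CostructuredArrow.w φ).trans (Category.comp_id _).symm }

/-! Given a cocone `s` under the canonical diagram, the induced morphism `X ⟶ s.pt` sends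
`x ∈ X(a)` to the value at `𝟙 a` of the leg of `s` at the map `ℤ[a] ⟶ X` classifying `x`.
It is additive because the legs of `s` are: the sum of `g, h : L ⟶ X` is the composite of
`ι₀ + ι₁ : L ⟶ L ⊕ L` with `[g, h]`, so compatibility of the legs along `ι₀ + ι₁` reduces
the leg at `g + h` to the legs at `g` and `h`. -/

section

variable {A : Type} [SmallCategory A]

def abYonedaEquiv {a : A} {X : Aᵒᵖ ⥤ AddCommGrpCat} :
    ((abYoneda A).obj a ⟶ X) ≃+ X.obj (op a) :=
  { ((AddCommGrpCat.adj.whiskerRight Aᵒᵖ).homEquiv _ _).trans yonedaEquiv with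
    map_add' := fun _ _ => rfl }

lemma abYonedaEquiv_apply {a : A} {X : Aᵒᵖ ⥤ AddCommGrpCat} (g : (abYoneda A).obj a ⟶ X) :
    abYonedaEquiv g = g.app (op a) (FreeAbelianGroup.of (𝟙 a)) :=
  rfl

lemma abYonedaEquiv_comp {a : A} {X Y : Aᵒᵖ ⥤ AddCommGrpCat} (g : (abYoneda A).obj a ⟶ X)
    (f : X ⟶ Y) : abYonedaEquiv (g ≫ f) = f.app (op a) (abYonedaEquiv g) :=
  rfl

lemma abYonedaEquiv_naturality {a b : A} {X : Aᵒᵖ ⥤ AddCommGrpCat}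
    (g : (abYoneda A).obj a ⟶ X) (f : b ⟶ a) :
    X.map f.op (abYonedaEquiv g) = abYonedaEquiv ((abYoneda A).map f ≫ g) := by
  rw [abYonedaEquiv_apply, abYonedaEquiv_apply]
  refine (NatTrans.naturality_apply g f.op
    (FreeAbelianGroup.of (𝟙 a) : ((abYoneda A).obj a).obj (op a))).symm.trans ?_
  change g.app (op b) (FreeAbelianGroup.of (f ≫ 𝟙 a)) =
    g.app (op b) (FreeAbelianGroup.of (𝟙 b ≫ f))
  rw [Category.comp_id, Category.id_comp]

lemma abYonedaEquiv_symm_naturality {a b : A} {X : Aᵒᵖ ⥤ AddCommGrpCat} (f : b ⟶ a)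
    (x : X.obj (op a)) :
    (abYoneda A).map f ≫ abYonedaEquiv.symm x = abYonedaEquiv.symm (X.map f.op x) := by
  apply abYonedaEquiv.injective
  rw [← abYonedaEquiv_naturality, AddEquiv.apply_symm_apply, AddEquiv.apply_symm_apply]

lemma abYoneda_hom_ext {X Y : Aᵒᵖ ⥤ AddCommGrpCat} {f g : X ⟶ Y}
    (h : ∀ (a : A) (p : (abYoneda A).obj a ⟶ X), p ≫ f = p ≫ g) : f = g := by
  ext ⟨a⟩ x
  simpa only [abYonedaEquiv_comp, AddEquiv.apply_symm_apply] using
    congrArg abYonedaEquiv (h a (abYonedaEquiv.symm x))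

section CanonicalCocone

variable {P : ObjectProperty (Aᵒᵖ ⥤ AddCommGrpCat)} {X : Aᵒᵖ ⥤ AddCommGrpCat}
  (s : Cocone (CostructuredArrow.proj P.ι X ⋙ P.ι))

def coconeLeg {L : Aᵒᵖ ⥤ AddCommGrpCat} (hL : P L) (g : L ⟶ X) : L ⟶ s.pt :=
  s.ι.app (CostructuredArrow.mk (S := P.ι) (Y := (⟨L, hL⟩ : P.FullSubcategory)) g)

lemma coconeLeg_comp {L L' : Aᵒᵖ ⥤ AddCommGrpCat} (hL : P L) (hL' : P L') (u : L' ⟶ L)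
    (g : L ⟶ X) : coconeLeg s hL' (u ≫ g) = u ≫ coconeLeg s hL g := by
  let φ : CostructuredArrow.mk (S := P.ι) (Y := (⟨L', hL'⟩ : P.FullSubcategory)) (u ≫ g) ⟶
      CostructuredArrow.mk (S := P.ι) (Y := (⟨L, hL⟩ : P.FullSubcategory)) g :=
    CostructuredArrow.homMk (ObjectProperty.homMk u)
  exact (s.w φ).symm

lemma coconeLeg_add {L : Aᵒᵖ ⥤ AddCommGrpCat} (hL : P L) (hL₂ : P (∐ fun _ : Fin 2 => L))
    (g h : L ⟶ X) : coconeLeg s hL (g + h) = coconeLeg s hL g + coconeLeg s hL h := by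
  let σ : L ⟶ ∐ fun _ : Fin 2 => L := Sigma.ι (fun _ => L) 0 + Sigma.ι (fun _ => L) 1
  have hσ : σ ≫ Sigma.desc ![g, h] = g + h := by simp [σ]
  rw [← hσ, coconeLeg_comp s hL₂ hL, Preadditive.add_comp, ← coconeLeg_comp s hL₂ hL,
    ← coconeLeg_comp s hL₂ hL]
  simp

variable (hrep : ∀ a, P ((abYoneda A).obj a))
  (hsum : ∀ a, P (∐ fun _ : Fin 2 => (abYoneda A).obj a))

def coconeDesc : X ⟶ s.pt where
  app b := AddCommGrpCat.ofHom <|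
    AddMonoidHom.mk' (fun x => abYonedaEquiv (coconeLeg s (hrep b.unop) (abYonedaEquiv.symm x)))
      fun x y => by rw [map_add, coconeLeg_add s (hrep _) (hsum _), map_add]
  naturality b c f := by
    ext x
    simp only [AddCommGrpCat.hom_comp, AddCommGrpCat.hom_ofHom, AddMonoidHom.coe_comp,
      Function.comp_apply, AddMonoidHom.mk'_apply]
    rw [← f.op_unop, ← abYonedaEquiv_symm_naturality, coconeLeg_comp s (hrep _) (hrep _),
      abYonedaEquiv_naturality]

lemma abYoneda_comp_coconeDesc {a : A} (g : (abYoneda A).obj a ⟶ X) :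
    g ≫ coconeDesc s hrep hsum = coconeLeg s (hrep a) g := by
  apply abYonedaEquiv.injective
  rw [abYonedaEquiv_comp]
  simp only [coconeDesc, AddCommGrpCat.hom_ofHom, AddMonoidHom.mk'_apply]
  rw [AddEquiv.symm_apply_apply]

lemma comp_coconeDesc {L : Aᵒᵖ ⥤ AddCommGrpCat} (hL : P L) (g : L ⟶ X) :
    g ≫ coconeDesc s hrep hsum = coconeLeg s hL g :=
  abYoneda_hom_ext fun a p => by
    rw [← Category.assoc, abYoneda_comp_coconeDesc, coconeLeg_comp]

end CanonicalCocone

theorem isDense_ι_of_abYoneda_mem {P : ObjectProperty (Aᵒᵖ ⥤ AddCommGrpCat)}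
    (hrep : ∀ a, P ((abYoneda A).obj a))
    (hsum : ∀ a, P (∐ fun _ : Fin 2 => (abYoneda A).obj a)) : P.ι.IsDense where
  isDenseAt X := ⟨{
    desc s := coconeDesc s hrep hsum
    fac s j := (congrArg (· ≫ coconeDesc s hrep hsum) (Category.id_comp j.hom)).trans
      (comp_coconeDesc s hrep hsum j.left.property j.hom)
    uniq s m hm := abYoneda_hom_ext (X := X) (Y := s.pt) fun a p =>
      ((congrArg (· ≫ m) (Category.id_comp p)).symm.trans
        (hm (.mk (S := P.ι) (Y := (⟨_, hrep a⟩ : P.FullSubcategory)) p))).trans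
        (abYoneda_comp_coconeDesc s hrep hsum p).symm }⟩

end

/-- **Density of the additive envelope.** For any small category `A`, every abelian presheaf
on `A` is the colimit of the canonical diagram of finite direct sums of representable abelian
presheaves mapping to it. -/
theorem addEnvelope_dense (A : Type) [SmallCategory A] (X : Aᵒᵖ ⥤ AddCommGrpCat) :
    Nonempty (IsColimit (canonicalCocone X)) := by
  have : (addEnvelopeInclusion A).IsDense := isDense_ι_of_abYoneda_mem
    (fun a => ⟨1, fun _ => a, ⟨(coproductUniqueIso fun _ : Fin 1 => (abYoneda A).obj a).symm⟩⟩)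
    fun a => ⟨2, fun _ => a, ⟨Iso.refl _⟩⟩
  exact ⟨((addEnvelopeInclusion A).denseAt X).ofIsoColimit (Cocone.ext (Iso.refl _))⟩
end
end

section
/- Let A be a small category and i : X → Y a monomorphism of presheaves of sets on A. Then for every object a of A, the induced morphism of free abelian groups ℤ^(X(a)) → ℤ^(Y(a)) is a monomorphism whose cokernel is a free abelian group. Consequently, for any functor L : A → Ch₊(Ab) whose values in each degree are direct sums of representable copresheaves, the induced morphism L_!^ab(ℤ[X]) → L_!^ab(ℤ[Y]) is degreewise a monomorphism with projective cokernel. -/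
/-!
An injection `f : S → T` identifies `T` with `S ⊔ (T \ f(S))`, so `ℤ[f]` is split by the map
`ℤ[T] → ℤ[S]` that inverts `f` on its image and kills the complement, and its cokernel is free on
`T \ f(S)`. Split monomorphisms are stable under coproducts, and the cokernel of a split
monomorphism is a retract of its target, here a coproduct of free, hence projective, groups.
-/

open CategoryTheory Limits Opposite

noncomputable section

namespace CategoryTheory.Limits

variable {C : Type*} [Category C]

theorem projective_cokernel_of_isSplitMono [Preadditive C] {A B : C} (s : A ⟶ B) [IsSplitMono s]
    [HasCokernel s] [Projective B] : Projective (cokernel s) :=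
  Retract.projective
    { i := cokernel.desc s (𝟙 B - retraction s ≫ s) (by simp [Preadditive.comp_sub])
      r := cokernel.π s
      retract := by ext; simp [Preadditive.sub_comp] }

instance isSplitMono_sigma_map {α : Type*} {f g : α → C} [HasCoproduct f] [HasCoproduct g]
    (p : ∀ a, f a ⟶ g a) [∀ a, IsSplitMono (p a)] : IsSplitMono (Sigma.map p) :=
  IsSplitMono.mk' ⟨Sigma.map fun a => retraction (p a), by simp [Sigma.map_comp_map]⟩

end CategoryTheory.Limits

namespace FreeAbelianGroup

variable {S T : Type*}

theorem lift_extend_comp_map {f : S → T} (hf : f.Injective) :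
    (lift (Function.extend f of 0)).comp (map f) = .id _ := by
  ext s
  simp [hf.extend_apply]

def quotientRangeMapEquiv (f : S → T) :
    FreeAbelianGroup T ⧸ (map f).range ≃+ FreeAbelianGroup ↥(Set.range f)ᶜ :=
  AddMonoidHom.toAddEquiv
    (QuotientAddGroup.lift _ (lift (Function.extend Subtype.val of 0)) <| by
      rw [AddMonoidHom.range_le_ker_iff]
      ext s
      simp)
    (lift fun c => QuotientAddGroup.mk' _ (of c.1))
    (by
      refine QuotientAddGroup.addMonoidHom_ext _ (lift_ext _ _ fun t => ?_)
      simp only [AddMonoidHom.coe_comp, Function.comp_apply, QuotientAddGroup.coe_mk',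
        QuotientAddGroup.lift_mk, lift_apply_of, AddMonoidHom.id_apply]
      by_cases ht : t ∈ Set.range f
      · obtain ⟨s, rfl⟩ := ht
        rw [Function.extend_apply' _ _ _ (by simp), Pi.zero_apply, map_zero, eq_comm,
          QuotientAddGroup.eq_zero_iff]
        exact ⟨of s, map_of_apply s⟩
      · obtain ⟨c, rfl⟩ : ∃ c : ↥(Set.range f)ᶜ, c.1 = t := ⟨⟨t, ht⟩, rfl⟩
        rw [Subtype.val_injective.extend_apply]
        simp)
    (by
      ext c
      simp)

end FreeAbelianGroup

namespace AddCommGrpCat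

universe u

instance projective_free_obj (T : Type u) : Projective (free.obj T) :=
  adj.map_projective T inferInstance

theorem isSplitMono_free_map {S T : Type u} {f : S ⟶ T} (hf : Function.Injective f) :
    IsSplitMono (free.map f) :=
  IsSplitMono.mk' ⟨ofHom (FreeAbelianGroup.lift (Function.extend f .of 0)),
    hom_ext (FreeAbelianGroup.lift_extend_comp_map hf)⟩

instance moduleFree_cokernel_free_map {S T : Type u} (f : S ⟶ T) :
    Module.Free ℤ ↥(cokernel (free.map f)) :=
  Module.Free.of_equiv ((cokernelIsoQuotient _).addCommGroupIsoToAddEquiv.trans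
    (FreeAbelianGroup.quotientRangeMapEquiv f)).toIntLinearEquiv.symm

end AddCommGrpCat

/-- **Free abelian presheaves on monomorphisms.** Let `A` be a small category and
`i : X ⟶ Y` a monomorphism of presheaves of sets on `A`. Then:
(1) for every object `a` of `A`, the induced morphism of free abelian groups
`ℤ^(X(a)) ⟶ ℤ^(Y(a))` is a monomorphism whose cokernel is a free abelian group;
(2) consequently, for every family of objects of `A` (such as the family of representables
occurring in a given degree of a functor `L : A ⥤ Ch₊(Ab)` whose values in each degree are
direct sums of representable copresheaves), the induced morphism
`⊕ᵢ ℤ^(X(aᵢ)) ⟶ ⊕ᵢ ℤ^(Y(aᵢ))` (i.e. the morphism `L_!^ab(ℤ[X]) ⟶ L_!^ab(ℤ[Y])` in that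
degree) is a monomorphism with projective cokernel. -/
theorem free_map_of_mono {A : Type} [SmallCategory A] {X Y : Aᵒᵖ ⥤ Type}
    (i : X ⟶ Y) [Mono i] :
    (∀ a : A, Mono (AddCommGrpCat.free.map (i.app (op a))) ∧
      Module.Free ℤ ↥(cokernel (AddCommGrpCat.free.map (i.app (op a))))) ∧
    (∀ (I : Type) (a : I → A),
      Mono (Limits.Sigma.map (f := fun j => AddCommGrpCat.free.obj (X.obj (op (a j))))
        (g := fun j => AddCommGrpCat.free.obj (Y.obj (op (a j))))
        fun j => AddCommGrpCat.free.map (i.app (op (a j)))) ∧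
      Projective (cokernel (Limits.Sigma.map (f := fun j => AddCommGrpCat.free.obj (X.obj (op (a j))))
        (g := fun j => AddCommGrpCat.free.obj (Y.obj (op (a j))))
        fun j => AddCommGrpCat.free.map (i.app (op (a j)))))) := by
  have (a : Aᵒᵖ) : IsSplitMono (AddCommGrpCat.free.map (i.app a)) :=
    AddCommGrpCat.isSplitMono_free_map
      ((mono_iff_injective _).1 ((NatTrans.mono_iff_mono_app i).1 ‹_› a))
  exact ⟨fun a => ⟨inferInstance, inferInstance⟩,
    fun I a => ⟨inferInstance, projective_cokernel_of_isSplitMono _⟩⟩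
end
end
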